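/- For the Vietoris–Rips complex at scale $\varepsilon/2$ on a finite metric space $X$ partitioned into sets $U_j$, the subcomplexes $\mathrm{VR}_{\varepsilon/2}(T_\varepsilon U_j)$ form a cover of $\mathrm{VR}_{\varepsilon/2}(X)$ by subcomplexes, and each intersection $\bigcap_{j \in J} \mathrm{VR}_{\varepsilon/2}(T_\varepsilon U_j)$ equals $\mathrm{VR}_{\varepsilon/2}(\bigcap_{j \in J} T_\varepsilon U_j)$. -/

import Mathlib

/-- The `ε`-tubular neighbourhood of `S` within `X`:
`T_ε S = {x ∈ X : d(x, S) < ε}`. -/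
def Tub {α : Type} [MetricSpace α] (X S : Set α) (ε : ℝ) : Set α :=
  {x ∈ X | ∃ u ∈ S, dist x u < ε}

/-- The Vietoris–Rips complex at scale `δ` on `S`: the simplices are the
nonempty finite subsets of `S` of diameter at most `δ`. -/
def VR {α : Type} [MetricSpace α] (δ : ℝ) (S : Set α) : Set (Finset α) :=
  {σ | σ.Nonempty ∧ ↑σ ⊆ S ∧ ∀ x ∈ σ, ∀ y ∈ σ, dist x y ≤ δ}

section VietorisRips

variable {α : Type} [MetricSpace α]

theorem mem_VR_Tub_of_mem_VR {δ ε : ℝ} {X S : Set α} {σ : Finset α}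
    (hσ : σ ∈ VR δ X) {x : α} (hxσ : x ∈ σ) (hxS : x ∈ S) (hδε : δ < ε) :
    σ ∈ VR δ (Tub X S ε) := by
  obtain ⟨hne, hsub, hdiam⟩ := hσ
  refine ⟨hne, fun y hy => ⟨hsub hy, x, hxS, ?_⟩, hdiam⟩
  exact (hdiam y hy x hxσ).trans_lt hδε

theorem biInter_VR {ι : Type} (δ : ℝ) (S : ι → Set α) {J : Set ι} (hJ : J.Nonempty) :
    {σ : Finset α | ∀ j ∈ J, σ ∈ VR δ (S j)} = VR δ (⋂ j ∈ J, S j) := by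
  obtain ⟨j₀, hj₀⟩ := hJ
  ext σ
  simp only [VR, Set.mem_ofPred_eq, Set.subset_iInter_iff]
  constructor
  · intro h
    obtain ⟨hne, -, hdiam⟩ := h j₀ hj₀
    exact ⟨hne, fun j hj => (h j hj).2.1, hdiam⟩
  · rintro ⟨hne, hsub, hdiam⟩ j hj
    exact ⟨hne, hsub j hj, hdiam⟩

end VietorisRips

theorem stmt_12_general {α ι : Type} [MetricSpace α] (ε : ℝ) (hε : 0 < ε)
    (X : Set α)
    (U : ι → Set α)
    (hpart : ∀ x ∈ X, ∃! j, x ∈ U j) :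
    (∀ σ ∈ VR (ε / 2) X, ∃ j, σ ∈ VR (ε / 2) (Tub X (U j) ε)) ∧
    (∀ J : Set ι, J.Nonempty →
      {σ : Finset α | ∀ j ∈ J, σ ∈ VR (ε / 2) (Tub X (U j) ε)} =
        VR (ε / 2) (⋂ j ∈ J, Tub X (U j) ε)) := by
  refine ⟨fun σ hσ => ?_, fun J hJ => biInter_VR (ε / 2) (fun j => Tub X (U j) ε) hJ⟩
  obtain ⟨x, hxσ⟩ := hσ.1
  obtain ⟨j, hxj, -⟩ := hpart x (hσ.2.1 hxσ)
  exact ⟨j, mem_VR_Tub_of_mem_VR hσ hxσ hxj (half_lt_self hε)⟩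

/-- **Vietoris–Rips complexes of tubular neighbourhoods cover and intersect
well.**  For a finite metric space `X` partitioned into sets `U j`, the
subcomplexes `VR_{ε/2}(T_ε (U j))` cover `VR_{ε/2}(X)`, and each intersection
`⋂_{j ∈ J} VR_{ε/2}(T_ε (U j))` equals `VR_{ε/2}(⋂_{j ∈ J} T_ε (U j))`. -/
theorem stmt_12 {α ι : Type} [MetricSpace α] (ε : ℝ) (hε : 0 < ε)
    (X : Set α) (hXfin : X.Finite)
    (U : ι → Set α)
    (hpart : ∀ x ∈ X, ∃! j, x ∈ U j) (hUX : ∀ j, U j ⊆ X) :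
    (∀ σ ∈ VR (ε / 2) X, ∃ j, σ ∈ VR (ε / 2) (Tub X (U j) ε)) ∧
    (∀ J : Set ι, J.Nonempty →
      {σ : Finset α | ∀ j ∈ J, σ ∈ VR (ε / 2) (Tub X (U j) ε)} =
        VR (ε / 2) (⋂ j ∈ J, Tub X (U j) ε)) :=
  stmt_12_general ε hε X U hpart
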